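/- arXiv:1812.10828 — 7 statements merged into one kernel-verified Lean document; each statement's English description precedes it below -/
import Mathlib

section
/- If c, h, f are positive integers with c² − f·h² = 1, then for every integer t ≥ 0, setting f(t) = (c−1)²h²t² + 2(c−1)²t + f, X = (c−1)h⁴t² + 2(c−1)h²t + c, Y = h³t + h, we have X² − f(t)·Y² = 1. -/
theorem stmt_1 (c h f : ℤ) (hc : 0 < c) (hh : 0 < h) (hf : 0 < f)
    (hpell : c ^ 2 - f * h ^ 2 = 1) (t : ℤ) (ht : 0 ≤ t) :
    ((c - 1) * h ^ 4 * t ^ 2 + 2 * (c - 1) * h ^ 2 * t + c) ^ 2 -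
      ((c - 1) ^ 2 * h ^ 2 * t ^ 2 + 2 * (c - 1) ^ 2 * t + f) * (h ^ 3 * t + h) ^ 2 = 1 := by
  linear_combination ((h ^ 2 * t + 1) ^ 2) * hpell
end

section
/- If c, h, f are positive integers with c² − f·h² = 1, then for every integer t ≥ 0, setting f(t) = (c+1)²h²t² + 2(c+1)²t + f, X = (c+1)h⁴t² + 2(c+1)h²t + c, Y = h³t + h, we have X² − f(t)·Y² = 1. -/
theorem stmt_2 (c h f : ℤ) (hc : 0 < c) (hh : 0 < h) (hf : 0 < f)
    (hpell : c ^ 2 - f * h ^ 2 = 1) (t : ℤ) (ht : 0 ≤ t) :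
    ((c + 1) * h ^ 4 * t ^ 2 + 2 * (c + 1) * h ^ 2 * t + c) ^ 2 -
      ((c + 1) ^ 2 * h ^ 2 * t ^ 2 + 2 * (c + 1) ^ 2 * t + f) * (h ^ 3 * t + h) ^ 2 = 1 := by
  linear_combination (h ^ 4 * t ^ 2 + 2 * h ^ 2 * t + 1) * hpell
end

section
/- If c, h, f are positive integers with c² − f·h² = 1, then for every integer t ≥ 0, setting f(t) = (c−1)²h⁶t⁴ + 4(c−1)²h⁴t³ + 6(c−1)²h²t² + 2(c−1)(2c−1)t + f, X = (c−1)h⁶t³ + 3(c−1)h⁴t² + 3(c−1)h²t + c, Y = h³t + h, we have X² − f(t)·Y² = 1. -/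
theorem stmt_3 (c h f : ℤ) (hc : 0 < c) (hh : 0 < h) (hf : 0 < f)
    (hpell : c ^ 2 - f * h ^ 2 = 1) (t : ℤ) (ht : 0 ≤ t) :
    ((c - 1) * h ^ 6 * t ^ 3 + 3 * (c - 1) * h ^ 4 * t ^ 2 + 3 * (c - 1) * h ^ 2 * t + c) ^ 2 -
      ((c - 1) ^ 2 * h ^ 6 * t ^ 4 + 4 * (c - 1) ^ 2 * h ^ 4 * t ^ 3 +
        6 * (c - 1) ^ 2 * h ^ 2 * t ^ 2 + 2 * (c - 1) * (2 * c - 1) * t + f) *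
        (h ^ 3 * t + h) ^ 2 = 1 := by
  linear_combination (h ^ 2 * t + 1) ^ 2 * hpell
end

section
/- Let A, B be positive integers with A² − f·B² = −1 for a positive integer f, and set c = 2A² + 1, h = 2AB. Then for every nonnegative integer t, with f(t) = (c+1)²h²t² + 2(c²−1)t + f, X = ((c+1)²/(c−1))h⁴t² + 2(c+1)h²t + c, and Y = ((c+1)/(c−1))h³t + h, the quantities X and Y are integers and X² − f(t)·Y² = 1. -/
theorem stmt_4 (f A B : ℤ) (hf : 0 < f) (hA : 0 < A) (hB : 0 < B)
    (hneg : A ^ 2 - f * B ^ 2 = -1) (t : ℤ) (ht : 0 ≤ t) :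
    let c : ℤ := 2 * A ^ 2 + 1
    let h : ℤ := 2 * A * B
    let ft : ℤ := (c + 1) ^ 2 * h ^ 2 * t ^ 2 + 2 * (c ^ 2 - 1) * t + f
    let X : ℚ := ((c : ℚ) + 1) ^ 2 / ((c : ℚ) - 1) * (h : ℚ) ^ 4 * (t : ℚ) ^ 2 +
      2 * ((c : ℚ) + 1) * (h : ℚ) ^ 2 * (t : ℚ) + (c : ℚ)
    let Y : ℚ := ((c : ℚ) + 1) / ((c : ℚ) - 1) * (h : ℚ) ^ 3 * (t : ℚ) + (h : ℚ)
    (∃ X' : ℤ, (X' : ℚ) = X) ∧ (∃ Y' : ℤ, (Y' : ℚ) = Y) ∧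
      X ^ 2 - (ft : ℚ) * Y ^ 2 = 1 := by
  intro c h ft X Y
  have hA2 : (A : ℚ) ≠ 0 := by exact_mod_cast hA.ne'
  have hc1 : (c : ℚ) - 1 ≠ 0 := by
    simp only [c]; push_cast; intro hcontra
    have : (A : ℚ) ^ 2 = 0 := by linarith
    exact hA2 (pow_eq_zero_iff (n := 2) (by norm_num) |>.mp this)
  have hfB : (f : ℚ) * (B : ℚ) ^ 2 = (A : ℚ) ^ 2 + 1 := by
    have : (A : ℚ) ^ 2 - f * B ^ 2 = -1 := by exact_mod_cast hneg
    linarith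
  refine ⟨⟨(c + 1) ^ 2 * h ^ 2 * (2 * B ^ 2) * t ^ 2 + 2 * (c + 1) * h ^ 2 * t + c, ?_⟩,
    ⟨(c + 1) * (2 * B ^ 2) * h * t + h, ?_⟩, ?_⟩
  · simp only [X, c, h]; push_cast; field_simp; ring
  · simp only [Y, c, h]; push_cast; field_simp; ring
  · simp only [X, Y, ft, c, h]; push_cast; field_simp
    linear_combination (-16*(A:ℚ)^6*(1+8*B^2*t+16*B^4*t^2+8*A^2*B^2*t+32*A^2*B^4*t^2+16*A^4*B^4*t^2)) * hfB
end

section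
/- For the convergents Aₖ/Bₖ of the continued fraction expansion of √f (f a positive nonsquare integer), with the standard sequences r₀ = 0, s₀ = 1, a₀ = ⌊√f⌋, r_{k+1} = aₖ sₖ − rₖ, s_{k+1} = (f − r_{k+1}²)/sₖ, a_{k+1} = ⌊(√f + r_{k+1})/s_{k+1}⌋, one has AₖA_{k−1} − f·BₖB_{k−1} = (−1)ᵏ r_{k+1} for all k ≥ −1. -/
/-- The pair `(rₖ, sₖ)` of the continued fraction algorithm for `√f`:
`r₀ = 0`, `s₀ = 1`, `r_{k+1} = aₖ sₖ − rₖ`, `s_{k+1} = (f − r_{k+1}²)/sₖ`,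
where `aₖ = ⌊(√f + rₖ)/sₖ⌋ = ⌊(⌊√f⌋ + rₖ)/sₖ⌋`. -/
def cfRS (f : ℕ) : ℕ → ℤ × ℤ
  | 0 => (0, 1)
  | k + 1 =>
    let p := cfRS f k
    let a := Int.fdiv ((Nat.sqrt f : ℤ) + p.1) p.2
    let r' := a * p.2 - p.1
    (r', Int.fdiv ((f : ℤ) - r' ^ 2) p.2)

/-- The `k`-th partial quotient `aₖ` of the continued fraction of `√f`. -/
def cfA (f : ℕ) (k : ℕ) : ℤ :=
  Int.fdiv ((Nat.sqrt f : ℤ) + (cfRS f k).1) (cfRS f k).2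

/-- Numerators of the convergents of `√f`, shifted by 2:
`cfNum f (k+2) = Aₖ`, with `A₋₂ = 0`, `A₋₁ = 1`. -/
def cfNum (f : ℕ) : ℕ → ℤ
  | 0 => 0
  | 1 => 1
  | k + 2 => cfA f k * cfNum f (k + 1) + cfNum f k

/-- Denominators of the convergents of `√f`, shifted by 2:
`cfDen f (k+2) = Bₖ`, with `B₋₂ = 1`, `B₋₁ = 0`. -/
def cfDen (f : ℕ) : ℕ → ℤ
  | 0 => 1
  | 1 => 0
  | k + 2 => cfA f k * cfDen f (k + 1) + cfDen f k

/-- `p` is a period of the (eventually periodic) partial quotient sequence of `√f`. -/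
def CFIsPeriod (f p : ℕ) : Prop :=
  0 < p ∧ ∀ k, 1 ≤ k → cfA f (k + p) = cfA f k

/-- `p` is the (minimal) period of the continued fraction expansion of `√f`. -/
def CFPeriod (f p : ℕ) : Prop :=
  CFIsPeriod f p ∧ ∀ q, CFIsPeriod f q → p ≤ q

/-- `(c, h)` is the fundamental (smallest positive) solution of `c² − f h² = 1`. -/
def IsFundamentalPell (f : ℕ) (c h : ℤ) : Prop :=
  0 < c ∧ 0 < h ∧ c ^ 2 - (f : ℤ) * h ^ 2 = 1 ∧
    ∀ c' h' : ℤ, 0 < c' → 0 < h' → c' ^ 2 - (f : ℤ) * h' ^ 2 = 1 → c ≤ c'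

lemma cfRS_succ (f : ℕ) (k : ℕ) :
    cfRS f (k + 1) = (cfA f k * (cfRS f k).2 - (cfRS f k).1,
      Int.fdiv ((f : ℤ) - (cfA f k * (cfRS f k).2 - (cfRS f k).1) ^ 2) (cfRS f k).2) := by
  rfl

lemma not_sq (f : ℕ) (hns : ¬ IsSquare f) (r : ℤ) : (f : ℤ) ≠ r ^ 2 := by
  intro h
  have hf : f = r.natAbs ^ 2 := by
    have := congrArg Int.natAbs h
    simpa [Int.natAbs_pow] using this
  exact hns ⟨r.natAbs, by rw [hf]; ring⟩

/-- invariants: sₙ ≠ 0 and sₙ ∣ f − rₙ². -/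
lemma cfRS_inv (f : ℕ) (hns : ¬ IsSquare f) :
    ∀ n, (cfRS f n).2 ≠ 0 ∧ (cfRS f n).2 ∣ ((f : ℤ) - (cfRS f n).1 ^ 2) := by
  intro n
  induction n with
  | zero => exact ⟨one_ne_zero, one_dvd _⟩
  | succ k ih =>
    obtain ⟨hs, hdvd⟩ := ih
    set r := (cfRS f k).1
    set s := (cfRS f k).2
    set a := cfA f k
    have hdvd' : s ∣ ((f : ℤ) - (a * s - r) ^ 2) := by
      have : (f : ℤ) - (a * s - r) ^ 2 = ((f : ℤ) - r ^ 2) - s * (a * (a * s - 2 * r)) := by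
        ring
      rw [this]
      exact dvd_sub hdvd ⟨_, rfl⟩
    have hexact : s * (cfRS f (k + 1)).2 = (f : ℤ) - (cfRS f (k + 1)).1 ^ 2 := by
      rw [cfRS_succ]
      dsimp only
      rw [Int.fdiv_eq_ediv_of_dvd hdvd', Int.mul_ediv_cancel' hdvd']
    constructor
    · intro h0
      apply not_sq f hns (cfRS f (k + 1)).1
      have := hexact
      rw [h0, mul_zero] at this
      linarith [this.symm]
    · exact ⟨s, by rw [← hexact]; ring⟩

lemma cfRS_exact (f : ℕ) (hns : ¬ IsSquare f) (k : ℕ) :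
    (cfRS f k).2 * (cfRS f (k + 1)).2 = (f : ℤ) - (cfRS f (k + 1)).1 ^ 2 := by
  obtain ⟨hs, hdvd⟩ := cfRS_inv f hns k
  have hdvd' : (cfRS f k).2 ∣ ((f : ℤ) - (cfA f k * (cfRS f k).2 - (cfRS f k).1) ^ 2) := by
    have : (f : ℤ) - (cfA f k * (cfRS f k).2 - (cfRS f k).1) ^ 2 =
        ((f : ℤ) - (cfRS f k).1 ^ 2) - (cfRS f k).2 * (cfA f k * (cfA f k * (cfRS f k).2 - 2 * (cfRS f k).1)) := by ring
    rw [this]; exact dvd_sub hdvd ⟨_, rfl⟩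
  rw [cfRS_succ]
  dsimp only
  rw [Int.fdiv_eq_ediv_of_dvd hdvd', Int.mul_ediv_cancel' hdvd']

lemma cfRS_base (f : ℕ) :
    ((f : ℤ) - (cfRS f 0).1 ^ 2) = (f : ℤ) * (cfRS f 0).2 := by
  simp [cfRS]

/-- Simultaneous induction: P, Q, Third. -/
lemma main_ind (f : ℕ) (hns : ¬ IsSquare f) (n : ℕ) :
    (cfNum f (n + 1) * cfNum f n - (f : ℤ) * (cfDen f (n + 1) * cfDen f n) =
      (-1) ^ (n + 1) * (cfRS f n).1) ∧
    (cfNum f (n + 1) ^ 2 - (f : ℤ) * cfDen f (n + 1) ^ 2 = (-1) ^ n * (cfRS f n).2) ∧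
    ((cfNum f n ^ 2 - (f : ℤ) * cfDen f n ^ 2) * (cfRS f n).2 =
      (-1) ^ (n + 1) * ((f : ℤ) - (cfRS f n).1 ^ 2)) := by
  induction n with
  | zero =>
    refine ⟨by simp [cfNum, cfDen, cfRS], by simp [cfNum, cfDen, cfRS], ?_⟩
    simp [cfNum, cfDen, cfRS]
  | succ k ih =>
    obtain ⟨hP, hQ, hT⟩ := ih
    have hsne := (cfRS_inv f hns k).1
    have hex := cfRS_exact f hns k
    have hr : (cfRS f (k + 1)).1 = cfA f k * (cfRS f k).2 - (cfRS f k).1 := by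
      rw [cfRS_succ]
    have hNum : cfNum f (k + 2) = cfA f k * cfNum f (k + 1) + cfNum f k := rfl
    have hDen : cfDen f (k + 2) = cfA f k * cfDen f (k + 1) + cfDen f k := rfl
    have hP' : cfNum f (k + 2) * cfNum f (k + 1) -
        (f : ℤ) * (cfDen f (k + 2) * cfDen f (k + 1)) =
        (-1) ^ (k + 2) * (cfRS f (k + 1)).1 := by
      have hm : ((-1:ℤ)) ^ (k + 1) = -(-1) ^ k := by rw [pow_succ]; ring
      have hm2 : ((-1:ℤ)) ^ (k + 2) = (-1) ^ k := by rw [pow_succ, pow_succ]; ring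
      rw [hNum, hDen, hr, hm2]
      rw [hm] at hP
      linear_combination cfA f k * hQ + hP
    have hQ' : cfNum f (k + 2) ^ 2 - (f : ℤ) * cfDen f (k + 2) ^ 2 =
        (-1) ^ (k + 1) * (cfRS f (k + 1)).2 := by
      have hmul : (cfNum f (k + 2) ^ 2 - (f : ℤ) * cfDen f (k + 2) ^ 2) * (cfRS f k).2 =
          ((-1) ^ (k + 1) * (cfRS f (k + 1)).2) * (cfRS f k).2 := by
        rw [hNum, hDen]
        have e1 : ((-1:ℤ)) ^ (k + 1) * (cfRS f (k + 1)).2 * (cfRS f k).2 =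
            (-1) ^ (k + 1) * ((f : ℤ) - (cfRS f (k + 1)).1 ^ 2) := by
          rw [← hex]; ring
        have hm : ((-1:ℤ)) ^ (k + 1) = -(-1) ^ k := by rw [pow_succ]; ring
        rw [e1, hr, hm]
        rw [hm] at hP hT
        linear_combination (cfA f k ^ 2 * (cfRS f k).2) * hQ +
          (2 * cfA f k * (cfRS f k).2) * hP + hT
      exact mul_right_cancel₀ hsne hmul
    have hT' : (cfNum f (k + 1) ^ 2 - (f : ℤ) * cfDen f (k + 1) ^ 2) * (cfRS f (k + 1)).2 =
        (-1) ^ (k + 2) * ((f : ℤ) - (cfRS f (k + 1)).1 ^ 2) := by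
      have hm2 : ((-1:ℤ)) ^ (k + 2) = (-1) ^ k := by rw [pow_succ, pow_succ]; ring
      rw [hQ, ← hex, hm2]
      ring
    exact ⟨hP', hQ', hT'⟩


/-- `AₖA_{k−1} − f BₖB_{k−1} = (−1)ᵏ r_{k+1}` for `k ≥ −1`; here `n` ranges over ℕ
with the actual index being `k = n − 1`, so `Aₖ = cfNum f (n+1)` and `r_{k+1} = (cfRS f n).1`. -/
theorem stmt_6 (f : ℕ) (hf : 0 < f) (hns : ¬ IsSquare f) (n : ℕ) :
    cfNum f (n + 1) * cfNum f n - (f : ℤ) * (cfDen f (n + 1) * cfDen f n) =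
      (-1) ^ (n + 1) * (cfRS f n).1 := by
  exact (main_ind f hns n).1
end

section
/- For the convergents Aₖ/Bₖ of the continued fraction expansion of √f (f a positive nonsquare integer), one has Aₖ² − f·Bₖ² = (−1)^{k+1} s_{k+1} for all k ≥ −1, where sₖ is the standard auxiliary sequence of the continued fraction algorithm for √f. -/
lemma cfRS_succ_fst (f n : ℕ) :
    (cfRS f (n+1)).1 = cfA f n * (cfRS f n).2 - (cfRS f n).1 := rfl

lemma cfRS_succ_snd (f n : ℕ) :
    (cfRS f (n+1)).2 = Int.fdiv ((f:ℤ) - (cfRS f (n+1)).1 ^ 2) (cfRS f n).2 := rfl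

lemma cfRS_nonsq {f : ℕ} (hns : ¬ IsSquare f) (r : ℤ) : (f:ℤ) - r ^ 2 ≠ 0 := by
  intro h
  apply hns
  refine ⟨r.natAbs, ?_⟩
  have : (f:ℤ) = r ^ 2 := by linarith
  have h2 : (f:ℤ) = ((r.natAbs * r.natAbs : ℕ) : ℤ) := by
    rw [Int.natAbs_mul_self]; nlinarith
  exact_mod_cast h2

lemma cfRS_key (f : ℕ) (hns : ¬ IsSquare f) :
    ∀ n, (cfRS f n).2 ≠ 0 ∧
      (cfRS f n).2 * (cfRS f (n+1)).2 = (f:ℤ) - (cfRS f (n+1)).1 ^ 2 := by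
  intro n
  induction n with
  | zero =>
    refine ⟨one_ne_zero, ?_⟩
    rw [cfRS_succ_snd f 0]
    show (1:ℤ) * Int.fdiv _ 1 = _
    rw [Int.fdiv_one, one_mul]
  | succ n ih =>
    obtain ⟨hs, hmul⟩ := ih
    have hs' : (cfRS f (n+1)).2 ≠ 0 := by
      intro h0
      exact cfRS_nonsq hns (cfRS f (n+1)).1 (by rw [← hmul, h0, mul_zero])
    refine ⟨hs', ?_⟩
    have hdvd : (f:ℤ) - (cfRS f (n+2)).1 ^ 2 =
        (cfRS f (n+1)).2 * ((cfRS f n).2 + 2 * cfA f (n+1) * (cfRS f (n+1)).1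
          - cfA f (n+1) ^ 2 * (cfRS f (n+1)).2) := by
      rw [cfRS_succ_fst f (n+1)]
      nlinarith [hmul]
    rw [cfRS_succ_snd f (n+1), hdvd, Int.mul_fdiv_cancel_left _ hs']

lemma cfMainPQ (f : ℕ) (hns : ¬ IsSquare f) : ∀ n,
    (cfNum f (n+1) ^ 2 - (f:ℤ) * cfDen f (n+1) ^ 2 = (-1) ^ n * (cfRS f n).2) ∧
    (cfNum f n * cfNum f (n+1) - (f:ℤ) * cfDen f n * cfDen f (n+1)
        = (-1) ^ (n+1) * (cfRS f n).1) ∧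
    ((cfRS f n).2 * (cfNum f n ^ 2 - (f:ℤ) * cfDen f n ^ 2)
        = (-1) ^ (n+1) * ((f:ℤ) - (cfRS f n).1 ^ 2)) := by
  intro n
  induction n with
  | zero => norm_num [cfNum, cfDen, cfRS]
  | succ n ih =>
    obtain ⟨P, Q, T⟩ := ih
    obtain ⟨hs, hmul⟩ := cfRS_key f hns n
    have hN : cfNum f (n+2) = cfA f n * cfNum f (n+1) + cfNum f n := rfl
    have hD : cfDen f (n+2) = cfA f n * cfDen f (n+1) + cfDen f n := rfl
    have hr' := cfRS_succ_fst f n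
    rw [hr'] at hmul
    rw [pow_succ] at Q T
    refine ⟨?_, ?_, ?_⟩
    · apply mul_left_cancel₀ hs
      rw [hN, hD, pow_succ]
      linear_combination ((cfA f n)^2 * (cfRS f n).2) * P
        + (2 * cfA f n * (cfRS f n).2) * Q + T + ((-1:ℤ)^n) * hmul
    · rw [hN, hD, hr', pow_succ, pow_succ]
      linear_combination (cfA f n) * P + Q
    · rw [hr', pow_succ, pow_succ]
      linear_combination ((-1:ℤ)^n) * hmul + (cfRS f (n+1)).2 * P

/-- `Aₖ² − f Bₖ² = (−1)^{k+1} s_{k+1}` for `k ≥ −1`; here the actual index is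
`k = n − 1`, so `Aₖ = cfNum f (n+1)` and `s_{k+1} = (cfRS f n).2`. -/
theorem stmt_7 (f : ℕ) (hf : 0 < f) (hns : ¬ IsSquare f) (n : ℕ) :
    cfNum f (n + 1) ^ 2 - (f : ℤ) * cfDen f (n + 1) ^ 2 = (-1) ^ n * (cfRS f n).2 :=
  (cfMainPQ f hns n).1
end

section
/- If the continued fraction expansion of √f has even period 2m, and (c, h) is the fundamental solution of c² − f·h² = 1, then c = AₘB_{m−1} + A_{m−1}B_{m−2} and h = B_{m−1}(Bₘ + B_{m−2}), where Aₖ/Bₖ are the convergents of √f. -/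
/-!
Write `ξₙ = (√f + rₙ)/sₙ` for the complete quotients and `Aₙ/Bₙ` for the convergents; then
`Aₙ² - f Bₙ² = (-1)ⁿ⁺¹ sₙ₊₁`. Two continued fractions with the same partial quotients agree, so the
period `2m` of the `aₙ` is a period of the `ξₙ`, which forces `s₂ₘ = 1`: `(A₂ₘ₋₁, B₂ₘ₋₁)` solves
the Pell equation. By Legendre's theorem every positive solution is a convergent `(Aₙ, Bₙ)`, and
then `sₙ₊₁ = 1` makes `n + 1` a period, so `n ≥ 2m - 1`: `(A₂ₘ₋₁, B₂ₘ₋₁)` is the fundamental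
solution. The conjugates of the `ξₙ` run the algorithm backwards, so `a₁ ⋯ a₂ₘ₋₁` is a
palindrome. Hence in the product `!![a₀, 1; 1, 0] ⋯ !![a₂ₘ₋₁, 1; 1, 0]`, whose first column is
`(A₂ₘ₋₁, B₂ₘ₋₁)`, the factors after `aₘ` multiply to the transpose of those for `a₁ ⋯ aₘ₋₁`,
whose first row is `(Bₘ₋₁, Bₘ₋₂)`.
-/

open Matrix

section ContinuantMatrix

variable {R : Type*} [CommSemiring R]

def stepMatrix (x : R) : Matrix (Fin 2) (Fin 2) R := !![x, 1; 1, 0]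

/-- The columns of `contMatrix a n` are the continuants `(Aₙ₋₁, Bₙ₋₁)` and `(Aₙ₋₂, Bₙ₋₂)` of
`[a 0; a 1, …, a (n - 1)]`. -/
def contMatrix (a : ℕ → R) : ℕ → Matrix (Fin 2) (Fin 2) R
  | 0 => 1
  | n + 1 => contMatrix a n * stepMatrix (a n)

@[simp]
lemma transpose_stepMatrix (x : R) : (stepMatrix x)ᵀ = stepMatrix x := by
  ext i j; fin_cases i <;> fin_cases j <;> rfl

@[simp]
lemma stepMatrix_mul_apply_zero (x : R) (X : Matrix (Fin 2) (Fin 2) R) (j : Fin 2) :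
    (stepMatrix x * X) 0 j = x * X 0 j + X 1 j := by
  simp [stepMatrix, mul_apply, Fin.sum_univ_two]

@[simp]
lemma stepMatrix_mul_apply_one (x : R) (X : Matrix (Fin 2) (Fin 2) R) (j : Fin 2) :
    (stepMatrix x * X) 1 j = X 0 j := by
  simp [stepMatrix, mul_apply, Fin.sum_univ_two]

@[simp]
lemma mul_stepMatrix_apply_zero (x : R) (X : Matrix (Fin 2) (Fin 2) R) (i : Fin 2) :
    (X * stepMatrix x) i 0 = X i 0 * x + X i 1 := by
  simp [stepMatrix, mul_apply, Fin.sum_univ_two]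

@[simp]
lemma mul_stepMatrix_apply_one (x : R) (X : Matrix (Fin 2) (Fin 2) R) (i : Fin 2) :
    (X * stepMatrix x) i 1 = X i 0 := by
  simp [stepMatrix, mul_apply, Fin.sum_univ_two]

lemma contMatrix_succ' (a : ℕ → R) (n : ℕ) :
    contMatrix a (n + 1) = stepMatrix (a 0) * contMatrix (fun i => a (i + 1)) n := by
  induction n with
  | zero => simp [contMatrix]
  | succ n ih => rw [contMatrix, ih, contMatrix, mul_assoc]

lemma contMatrix_add (a : ℕ → R) (n k : ℕ) :
    contMatrix a (n + k) = contMatrix a n * contMatrix (fun i => a (n + i)) k := by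
  induction k with
  | zero => simp [contMatrix]
  | succ k ih => rw [← add_assoc, contMatrix, ih, contMatrix, mul_assoc]

lemma transpose_contMatrix {a b : ℕ → R} {n : ℕ} (h : ∀ i j, i + j + 1 = n → b i = a j) :
    (contMatrix a n)ᵀ = contMatrix b n := by
  induction n generalizing a with
  | zero => simp [contMatrix]
  | succ n ih =>
    rw [contMatrix_succ', transpose_mul, transpose_stepMatrix, contMatrix, h n 0 rfl,
      ih fun i j hij => h i (j + 1) (by omega)]

end ContinuantMatrix

lemma det_contMatrix {R : Type*} [CommRing R] (a : ℕ → R) (n : ℕ) :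
    (contMatrix a n).det = (-1) ^ n := by
  induction n with
  | zero => simp [contMatrix]
  | succ n ih => simp [contMatrix, det_mul, ih, stepMatrix, det_fin_two_of, pow_succ]

lemma one_le_contMatrix_zero_zero_and_nonneg {a : ℕ → ℤ} (ha : ∀ i, 1 ≤ a i) (n : ℕ) :
    1 ≤ contMatrix a n 0 0 ∧ ∀ i j, 0 ≤ contMatrix a n i j := by
  induction n with
  | zero => refine ⟨le_rfl, fun i j => ?_⟩; fin_cases i <;> fin_cases j <;> simp [contMatrix]
  | succ n ih =>
    obtain ⟨h00, hnn⟩ := ih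
    have := ha n
    refine ⟨?_, fun i j => ?_⟩
    · rw [contMatrix, mul_stepMatrix_apply_zero]; nlinarith [hnn 0 1]
    · match j with
      | 0 => rw [contMatrix, mul_stepMatrix_apply_zero]; nlinarith [hnn i 0, hnn i 1]
      | 1 => rw [contMatrix, mul_stepMatrix_apply_one]; exact hnn i 0

lemma Real.convergent_eq_contMatrix {ξ : ℕ → ℝ} (hξ : ∀ k, ξ (k + 1) = (Int.fract (ξ k))⁻¹)
    (hξ1 : ∀ k, 1 < ξ (k + 1)) (n : ℕ) :
    (ξ 0).convergent n = ((contMatrix (fun k => ⌊ξ k⌋) (n + 1) 0 0 : ℤ) : ℚ) /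
      (contMatrix (fun k => ⌊ξ k⌋) (n + 1) 1 0 : ℤ) := by
  induction n generalizing ξ with
  | zero => simp [contMatrix, stepMatrix]
  | succ n ih =>
    have hX : ((contMatrix (fun k => ⌊ξ (k + 1)⌋) (n + 1) 0 0 : ℤ) : ℚ) ≠ 0 := by
      have h1 : ∀ k, 1 ≤ ⌊ξ (k + 1)⌋ := fun k => Int.le_floor.mpr (mod_cast (hξ1 k).le)
      have := (one_le_contMatrix_zero_zero_and_nonneg h1 (n + 1)).1
      positivity
    rw [Real.convergent_succ, ← hξ, ih (ξ := fun k => ξ (k + 1)) (fun k => hξ (k + 1))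
      (fun k => hξ1 (k + 1)), contMatrix_succ' _ (n + 1), stepMatrix_mul_apply_zero,
      stepMatrix_mul_apply_one, inv_div]
    push_cast
    field_simp

/-- `|xₙ - yₙ|` at least doubles every two steps, yet stays below `1`. -/
lemma eq_of_sub_mul_succ_eq_one {a : ℕ → ℤ} {x y : ℕ → ℝ} (hx : ∀ n, 1 < x n)
    (hy : ∀ n, 1 < y n) (hxa : ∀ n, (x n - a n) * x (n + 1) = 1)
    (hya : ∀ n, (y n - a n) * y (n + 1) = 1) : x 0 = y 0 := by
  have hxa_mem : ∀ n, 0 < x n - a n ∧ x n - a n < 1 := fun n => by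
    have := hx (n + 1); have := hxa n; constructor <;> nlinarith
  have hya_mem : ∀ n, 0 < y n - a n ∧ y n - a n < 1 := fun n => by
    have := hy (n + 1); have := hya n; constructor <;> nlinarith
  have ha : ∀ n, (1 : ℝ) ≤ a n := fun n => by
    have : (0 : ℝ) < a n := by linarith [hx n, (hxa_mem n).2]
    exact_mod_cast (Int.cast_pos.mp this : 0 < a n)
  have hlt : ∀ n, |x n - y n| < 1 := fun n => by
    rw [abs_sub_lt_iff]; constructor <;> linarith [hxa_mem n, hya_mem n]
  have hstep : ∀ n, |x n - y n| * (x (n + 1) * y (n + 1)) = |x (n + 1) - y (n + 1)| := fun n => by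
    have hxy : 0 < x (n + 1) * y (n + 1) := by nlinarith [hx (n + 1), hy (n + 1)]
    rw [← abs_of_pos hxy, ← abs_mul, ← abs_neg]
    congr 1
    linear_combination -y (n + 1) * hxa n + x (n + 1) * hya n
  have hdouble : ∀ n, 2 * |x n - y n| ≤ |x (n + 2) - y (n + 2)| := fun n => by
    rw [← hstep, ← hstep]
    have hx2 : 2 ≤ x (n + 1) * x (n + 2) := by
      nlinarith [hxa (n + 1), ha (n + 1), hx (n + 2)]
    have hy2 : 1 ≤ y (n + 1) * y (n + 2) := by nlinarith [hy (n + 1), hy (n + 2)]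
    have h4 : 2 ≤ x (n + 1) * y (n + 1) * (x (n + 2) * y (n + 2)) := by nlinarith
    nlinarith [mul_le_mul_of_nonneg_left h4 (abs_nonneg (x n - y n))]
  have hpow : ∀ k, 2 ^ k * |x 0 - y 0| < 1 := fun k => by
    refine lt_of_le_of_lt ?_ (hlt (2 * k))
    induction k with
    | zero => simp
    | succ k ih =>
      rw [pow_succ, mul_comm _ 2, mul_assoc, show 2 * (k + 1) = 2 * k + 2 by ring]
      linarith [hdouble (2 * k)]
  by_contra hne
  have hpos : 0 < |x 0 - y 0| := abs_pos.mpr (sub_ne_zero.mpr hne)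
  obtain ⟨k, hk⟩ := pow_unbounded_of_one_lt (|x 0 - y 0|)⁻¹ one_lt_two
  have := hpow k
  rw [inv_lt_iff_one_lt_mul₀ hpos] at hk
  linarith

lemma eq_of_add_div_eq_add_div {α : ℝ} (hα : Irrational α) {r s r' s' : ℤ} (hs : s ≠ 0)
    (hs' : s' ≠ 0) (h : (α + r) / s = (α + r') / s') : r = r' ∧ s = s' := by
  rw [div_eq_div_iff (mod_cast hs) (mod_cast hs')] at h
  have hss : s = s' := by
    by_contra hne
    refine (hα.mul_intCast (sub_ne_zero.mpr (Ne.symm hne))).ne_int (r' * s - r * s') ?_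
    push_cast
    linear_combination h
  subst hss
  refine ⟨?_, rfl⟩
  have : (r : ℝ) = r' := by
    have hs'' : (s : ℝ) ≠ 0 := mod_cast hs
    apply mul_right_cancel₀ hs''
    linear_combination h
  exact_mod_cast this

section SqrtContinuedFraction

variable {f : ℕ}

lemma two_le_of_not_isSquare (hns : ¬ IsSquare f) : 2 ≤ f := by
  by_contra! h
  interval_cases f
  exacts [hns ⟨0, rfl⟩, hns ⟨1, rfl⟩]

lemma one_lt_sqrt (hns : ¬ IsSquare f) : 1 < √(f : ℝ) := by
  rw [Real.lt_sqrt zero_le_one, one_pow]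
  exact_mod_cast two_le_of_not_isSquare hns

lemma sub_sq_ne_zero (hns : ¬ IsSquare f) (x : ℤ) : (f : ℤ) - x ^ 2 ≠ 0 := by
  intro h
  refine hns ⟨x.natAbs, ?_⟩
  zify
  rw [abs_mul_abs_self]
  linear_combination h

def cfR (f n : ℕ) : ℤ := (cfRS f n).1

def cfS (f n : ℕ) : ℤ := (cfRS f n).2

lemma cfR_succ (n : ℕ) : cfR f (n + 1) = cfA f n * cfS f n - cfR f n := rfl

lemma cfS_succ (n : ℕ) : cfS f (n + 1) = Int.fdiv (f - cfR f (n + 1) ^ 2) (cfS f n) := rfl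

lemma cfA_eq_fdiv (n : ℕ) : cfA f n = Int.fdiv (Nat.sqrt f + cfR f n) (cfS f n) := rfl

lemma cfS_mul_cfS_succ_of_dvd {n : ℕ} (hs : cfS f n ≠ 0) (hdvd : cfS f n ∣ f - cfR f n ^ 2) :
    cfS f n * cfS f (n + 1) = f - cfR f (n + 1) ^ 2 := by
  have hdvd' : cfS f n ∣ f - cfR f (n + 1) ^ 2 := by
    have : (f : ℤ) - cfR f (n + 1) ^ 2 = (f - cfR f n ^ 2) -
        cfS f n * (cfA f n ^ 2 * cfS f n - 2 * cfA f n * cfR f n) := by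
      rw [cfR_succ]; ring
    exact this ▸ dvd_sub hdvd (dvd_mul_right _ _)
  obtain ⟨t, ht⟩ := hdvd'
  rw [cfS_succ, ht, Int.mul_fdiv_cancel_left _ hs]

lemma cfS_ne_zero_and_dvd (hns : ¬ IsSquare f) (n : ℕ) :
    cfS f n ≠ 0 ∧ cfS f n ∣ f - cfR f n ^ 2 := by
  induction n with
  | zero => exact ⟨one_ne_zero, one_dvd _⟩
  | succ n ih =>
    have hmul := cfS_mul_cfS_succ_of_dvd ih.1 ih.2
    refine ⟨fun h => sub_sq_ne_zero hns (cfR f (n + 1)) ?_, Dvd.intro_left _ hmul⟩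
    rw [← hmul, h, mul_zero]

lemma cfS_ne_zero (hns : ¬ IsSquare f) (n : ℕ) : cfS f n ≠ 0 := (cfS_ne_zero_and_dvd hns n).1

lemma cfS_mul_cfS_succ (hns : ¬ IsSquare f) (n : ℕ) :
    cfS f n * cfS f (n + 1) = f - cfR f (n + 1) ^ 2 :=
  cfS_mul_cfS_succ_of_dvd (cfS_ne_zero_and_dvd hns n).1 (cfS_ne_zero_and_dvd hns n).2

lemma contMatrix_cfA (f n : ℕ) :
    contMatrix (cfA f) n = !![cfNum f (n + 1), cfNum f n; cfDen f (n + 1), cfDen f n] := by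
  induction n with
  | zero => ext i j; fin_cases i <;> fin_cases j <;> rfl
  | succ n ih =>
    rw [contMatrix, ih]
    ext i j; fin_cases i <;> fin_cases j <;>
      simp [stepMatrix, cfNum, cfDen, mul_apply, Fin.sum_univ_two, mul_comm]

lemma cfNum_mul_cfDen_sub (f n : ℕ) :
    cfNum f (n + 1) * cfDen f n - cfNum f n * cfDen f (n + 1) = (-1) ^ n := by
  simpa [contMatrix_cfA, det_fin_two_of] using det_contMatrix (cfA f) n

/-- The integer form of `√f = (ξₙ Aₙ₋₁ + Aₙ₋₂) / (ξₙ Bₙ₋₁ + Bₙ₋₂)` with `ξₙ = (√f + rₙ)/sₙ`. -/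
lemma cfNum_eq_and_cfDen_eq (hns : ¬ IsSquare f) (n : ℕ) :
    cfNum f (n + 1) = cfR f n * cfDen f (n + 1) + cfS f n * cfDen f n ∧
      f * cfDen f (n + 1) = cfR f n * cfNum f (n + 1) + cfS f n * cfNum f n := by
  induction n with
  | zero => simp [cfNum, cfDen, cfR, cfS, cfRS]
  | succ n ih =>
    obtain ⟨ih1, ih2⟩ := ih
    have hmul := cfS_mul_cfS_succ hns n
    rw [cfR_succ] at hmul ⊢
    simp only [cfNum, cfDen]
    constructor <;> apply mul_left_cancel₀ (cfS_ne_zero hns n)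
    · linear_combination -(cfDen f (n + 1)) * hmul - ih2 +
        (cfA f n * cfS f n - cfR f n) * ih1
    · linear_combination -(cfNum f (n + 1)) * hmul + (cfA f n * cfS f n - cfR f n) * ih2 -
        f * ih1

lemma cfNum_sq_sub (hns : ¬ IsSquare f) (n : ℕ) :
    cfNum f (n + 1) ^ 2 - f * cfDen f (n + 1) ^ 2 = (-1) ^ n * cfS f n := by
  obtain ⟨h1, h2⟩ := cfNum_eq_and_cfDen_eq hns n
  linear_combination cfNum f (n + 1) * h1 - cfDen f (n + 1) * h2 +
    cfS f n * cfNum_mul_cfDen_sub f n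

/-- The complete quotient `ξₙ = (√f + rₙ)/sₙ`, so that `√f = [a₀; a₁, …, aₙ₋₁, ξₙ]`. -/
noncomputable def cfXi (f n : ℕ) : ℝ := (√f + cfR f n) / cfS f n

/-- The algebraic conjugate of `cfXi f n`. -/
noncomputable def cfEta (f n : ℕ) : ℝ := (-√f + cfR f n) / cfS f n

lemma cfXi_zero : cfXi f 0 = √f := by simp [cfXi, cfR, cfS, cfRS]

lemma cfEta_zero : cfEta f 0 = -√f := by simp [cfEta, cfR, cfS, cfRS]

lemma cfXi_sub_cfEta (n : ℕ) : cfXi f n - cfEta f n = 2 * √f / cfS f n := by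
  unfold cfXi cfEta; ring

lemma add_cfR_div_cfS_sub_cfA_mul (hns : ¬ IsSquare f) {x : ℝ} (hx : x ^ 2 = f) (n : ℕ) :
    ((x + cfR f n) / cfS f n - cfA f n) * ((x + cfR f (n + 1)) / cfS f (n + 1)) = 1 := by
  have hs : (cfS f n : ℝ) ≠ 0 := mod_cast cfS_ne_zero hns n
  have hs' : (cfS f (n + 1) : ℝ) ≠ 0 := mod_cast cfS_ne_zero hns (n + 1)
  have hmul : (cfS f n * cfS f (n + 1) : ℝ) = f - cfR f (n + 1) ^ 2 :=
    mod_cast cfS_mul_cfS_succ hns n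
  have hr : (cfR f (n + 1) : ℝ) = cfA f n * cfS f n - cfR f n := mod_cast cfR_succ n
  field_simp
  linear_combination hx - hmul + (x + cfR f (n + 1)) * hr

lemma cfXi_sub_cfA_mul (hns : ¬ IsSquare f) (n : ℕ) :
    (cfXi f n - cfA f n) * cfXi f (n + 1) = 1 :=
  add_cfR_div_cfS_sub_cfA_mul hns (Real.sq_sqrt f.cast_nonneg) n

lemma cfEta_sub_cfA_mul (hns : ¬ IsSquare f) (n : ℕ) :
    (cfEta f n - cfA f n) * cfEta f (n + 1) = 1 := by
  simpa [cfEta, neg_add_eq_sub] using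
    add_cfR_div_cfS_sub_cfA_mul hns (x := -√f) (by rw [neg_sq, Real.sq_sqrt f.cast_nonneg]) n

lemma irrational_cfXi (hns : ¬ IsSquare f) (n : ℕ) : Irrational (cfXi f n) :=
  ((irrational_sqrt_natCast_iff.mpr hns).add_intCast _).div_intCast (cfS_ne_zero hns n)

lemma cfA_eq_floor_of_cfS_pos {n : ℕ} (hs : 0 < cfS f n) : cfA f n = ⌊cfXi f n⌋ := by
  rw [cfXi, Int.floor_div_cast_of_nonneg hs.le, ← Int.fdiv_eq_ediv_of_nonneg _ hs.le,
    Int.floor_add_intCast, Real.floor_real_sqrt_eq_nat_sqrt, cfA_eq_fdiv]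

lemma cfS_pos_and_one_lt_cfXi_and_cfEta_neg (hns : ¬ IsSquare f) (n : ℕ) :
    0 < cfS f n ∧ 1 < cfXi f n ∧ cfEta f n < 0 := by
  induction n with
  | zero =>
    have := one_lt_sqrt hns
    refine ⟨one_pos, ?_, ?_⟩ <;> simp only [cfXi_zero, cfEta_zero] <;> linarith
  | succ n ih =>
    obtain ⟨hs, hξ, hη⟩ := ih
    have ha := cfA_eq_floor_of_cfS_pos hs
    have ha1 : (1 : ℝ) ≤ cfA f n := mod_cast ha ▸ Int.le_floor.mpr (mod_cast hξ.le)
    have hfract : cfXi f n - cfA f n = Int.fract (cfXi f n) := by rw [ha]; rfl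
    have hfract_pos := Int.fract_pos.mpr ((irrational_cfXi hns n).ne_int ⌊cfXi f n⌋)
    have hξmul := cfXi_sub_cfA_mul hns n
    have hηmul := cfEta_sub_cfA_mul hns n
    rw [hfract] at hξmul
    have hξ' : 1 < cfXi f (n + 1) := by nlinarith [Int.fract_lt_one (cfXi f n)]
    have hη' : cfEta f (n + 1) < 0 := by nlinarith
    refine ⟨?_, hξ', hη'⟩
    have hgap : 0 < 2 * √(f : ℝ) / cfS f (n + 1) := by
      rw [← cfXi_sub_cfEta]; linarith
    exact_mod_cast (div_pos_iff_of_pos_left (by linarith [one_lt_sqrt hns])).mp hgap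

lemma cfS_pos (hns : ¬ IsSquare f) (n : ℕ) : 0 < cfS f n := (cfS_pos_and_one_lt_cfXi_and_cfEta_neg hns n).1

lemma one_lt_cfXi (hns : ¬ IsSquare f) (n : ℕ) : 1 < cfXi f n :=
  (cfS_pos_and_one_lt_cfXi_and_cfEta_neg hns n).2.1

lemma cfA_eq_floor (hns : ¬ IsSquare f) (n : ℕ) : cfA f n = ⌊cfXi f n⌋ :=
  cfA_eq_floor_of_cfS_pos (cfS_pos hns n)

lemma one_le_cfA (hns : ¬ IsSquare f) (n : ℕ) : 1 ≤ cfA f n := by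
  rw [cfA_eq_floor hns, Int.le_floor]
  exact_mod_cast (one_lt_cfXi hns n).le

lemma cfXi_succ (hns : ¬ IsSquare f) (n : ℕ) : cfXi f (n + 1) = (Int.fract (cfXi f n))⁻¹ := by
  rw [Int.fract, ← cfA_eq_floor hns]
  exact (inv_eq_of_mul_eq_one_right (cfXi_sub_cfA_mul hns n)).symm

lemma cfEta_succ_mem_Ioo (hns : ¬ IsSquare f) (n : ℕ) : cfEta f (n + 1) ∈ Set.Ioo (-1) 0 := by
  have hη := (cfS_pos_and_one_lt_cfXi_and_cfEta_neg hns n).2.2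
  have ha : (1 : ℝ) ≤ cfA f n := mod_cast one_le_cfA hns n
  have hmul := cfEta_sub_cfA_mul hns n
  constructor <;> nlinarith

lemma convergent_sqrt_eq_cfNum_div_cfDen (hns : ¬ IsSquare f) (n : ℕ) :
    (√(f : ℝ)).convergent n = (cfNum f (n + 2) : ℚ) / cfDen f (n + 2) := by
  have h := Real.convergent_eq_contMatrix (cfXi_succ hns) (fun k => one_lt_cfXi hns (k + 1)) n
  simpa [cfXi_zero, ← cfA_eq_floor hns, contMatrix_cfA] using h

lemma cfRS_add_of_eq {i j : ℕ} (h : cfRS f i = cfRS f j) (n : ℕ) :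
    cfRS f (i + n) = cfRS f (j + n) := by
  induction n with
  | zero => exact h
  | succ n ih => rw [← add_assoc, ← add_assoc, cfRS, cfRS, ih]

lemma cfA_add_of_eq {i j : ℕ} (h : cfRS f i = cfRS f j) (n : ℕ) :
    cfA f (i + n) = cfA f (j + n) := by
  rw [cfA, cfA, cfRS_add_of_eq h]

lemma cfXi_add_period (hns : ¬ IsSquare f) {p : ℕ} (hp : CFIsPeriod f p) {t : ℕ} (ht : 1 ≤ t) :
    cfXi f (t + p) = cfXi f t :=
  eq_of_sub_mul_succ_eq_one (a := fun n => cfA f (t + n)) (x := fun n => cfXi f (t + p + n))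
    (y := fun n => cfXi f (t + n)) (fun n => one_lt_cfXi hns _)
    (fun n => one_lt_cfXi hns _)
    (fun n => by
      rw [← hp.2 (t + n) (by omega), add_right_comm t n p]
      exact cfXi_sub_cfA_mul hns (t + p + n))
    (fun n => cfXi_sub_cfA_mul hns (t + n))

lemma cfRS_period_add_one (hns : ¬ IsSquare f) {p : ℕ} (hp : CFIsPeriod f p) :
    cfRS f (p + 1) = cfRS f 1 := by
  rw [add_comm]
  obtain ⟨hr, hs⟩ := eq_of_add_div_eq_add_div (irrational_sqrt_natCast_iff.mpr hns)
    (cfS_ne_zero hns _) (cfS_ne_zero hns _) (cfXi_add_period hns hp le_rfl)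
  exact Prod.ext hr hs

lemma cfS_period (hns : ¬ IsSquare f) {p : ℕ} (hp : CFIsPeriod f p) : cfS f p = 1 := by
  have h := cfRS_period_add_one hns hp
  have hr : cfR f (p + 1) = cfR f 1 := congrArg Prod.fst h
  have hs : cfS f (p + 1) = cfS f 1 := congrArg Prod.snd h
  have h0 := cfS_mul_cfS_succ hns 0
  have hp1 := cfS_mul_cfS_succ hns p
  rw [hr, hs, ← h0] at hp1
  exact mul_right_cancel₀ (cfS_ne_zero hns 1) hp1

lemma cfRS_succ_of_cfS_eq_one {k : ℕ} (hk : cfS f k = 1) : cfRS f (k + 1) = cfRS f 1 := by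
  have hk' : (cfRS f k).2 = 1 := hk
  simp [cfRS, hk', Int.fdiv_one]

lemma isPeriod_of_cfS_eq_one {k : ℕ} (hk1 : 1 ≤ k) (hk : cfS f k = 1) : CFIsPeriod f k := by
  refine ⟨hk1, fun j hj => ?_⟩
  obtain ⟨n, rfl⟩ := Nat.exists_eq_add_of_le hj
  simpa [add_comm, add_left_comm] using cfA_add_of_eq (cfRS_succ_of_cfS_eq_one hk) n

lemma one_le_cfNum (hns : ¬ IsSquare f) (n : ℕ) : 1 ≤ cfNum f (n + 1) := by
  simpa [contMatrix_cfA] using (one_le_contMatrix_zero_zero_and_nonneg (one_le_cfA hns) n).1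

lemma one_le_cfDen (hns : ¬ IsSquare f) (n : ℕ) : 1 ≤ cfDen f (n + 2) := by
  have h := congrFun (congrFun (contMatrix_succ' (cfA f) n) 1) 0
  rw [stepMatrix_mul_apply_one, contMatrix_cfA] at h
  exact (one_le_contMatrix_zero_zero_and_nonneg (fun i => one_le_cfA hns (i + 1)) n).1.trans_eq h.symm

lemma monotone_cfNum_succ (hns : ¬ IsSquare f) : Monotone fun n => cfNum f (n + 1) := by
  refine monotone_nat_of_le_succ fun n => ?_
  have h0 : 0 ≤ cfNum f n := by
    cases n with
    | zero => exact le_rfl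
    | succ n => linarith [one_le_cfNum hns n]
  show cfNum f (n + 1) ≤ cfA f n * cfNum f (n + 1) + cfNum f n
  nlinarith [one_le_cfA hns n, one_le_cfNum hns n]

lemma isCoprime_cfNum_cfDen (f n : ℕ) : IsCoprime (cfNum f (n + 1)) (cfDen f (n + 1)) := by
  have hsq : ((-1 : ℤ) ^ n) ^ 2 = 1 := by rw [← pow_mul, mul_comm, pow_mul, neg_one_sq, one_pow]
  refine ⟨(-1) ^ n * cfDen f n, -(-1) ^ n * cfNum f n, ?_⟩
  linear_combination (-1) ^ n * cfNum_mul_cfDen_sub f n + hsq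

lemma abs_sqrt_sub_div_lt_of_pell (hf : 0 < f) {x y : ℤ} (hx : 0 < x) (hy : 0 < y)
    (h : x ^ 2 - f * y ^ 2 = 1) : |√(f : ℝ) - x / y| < 1 / (2 * y ^ 2) := by
  have hyR : (0 : ℝ) < y := mod_cast hy
  have hxR : (0 : ℝ) < x := mod_cast hx
  have hsq : √(f : ℝ) ^ 2 = f := Real.sq_sqrt f.cast_nonneg
  have hsqrt : 1 ≤ √(f : ℝ) := Real.one_le_sqrt.mpr (mod_cast hf)
  have hR : ((x : ℝ) - y * √f) * (x + y * √f) = 1 := by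
    have : (x : ℝ) ^ 2 - f * y ^ 2 = 1 := mod_cast h
    linear_combination this - y ^ 2 * hsq
  have hsum : 0 < (x : ℝ) + y * √f := by positivity
  have heq : (x : ℝ) / y - √f = 1 / (y * (x + y * √f)) := by
    field_simp
    linear_combination hR
  rw [abs_sub_comm, heq, abs_of_pos (by positivity)]
  have hpos : 0 < (x : ℝ) - y * √f := by nlinarith
  apply one_div_lt_one_div_of_lt (by positivity)
  nlinarith [mul_le_mul_of_nonneg_left hsqrt hyR.le]

lemma exists_eq_cfNum_cfDen_of_pell (hns : ¬ IsSquare f) {x y : ℤ} (hx : 0 < x) (hy : 0 < y)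
    (h : x ^ 2 - f * y ^ 2 = 1) : ∃ n, x = cfNum f (n + 2) ∧ y = cfDen f (n + 2) := by
  have hxy : Nat.Coprime x.natAbs y.natAbs :=
    Int.isCoprime_iff_nat_coprime.mp ⟨x, -f * y, by linear_combination h⟩
  have hf : 0 < f := by linarith [two_le_of_not_isSquare hns]
  obtain ⟨n, hn⟩ := Real.exists_rat_eq_convergent (ξ := √(f : ℝ)) (q := (x / y : ℚ)) (by
    have hden : ((x / y : ℚ).den : ℝ) = y := mod_cast Rat.den_div_eq_of_coprime hy hxy
    rw [hden]
    push_cast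
    exact abs_sqrt_sub_div_lt_of_pell hf hx hy h)
  rw [convergent_sqrt_eq_cfNum_div_cfDen hns] at hn
  exact ⟨n, Rat.div_int_inj hy (by linarith [one_le_cfDen hns n]) hxy
    (Int.isCoprime_iff_nat_coprime.mp (isCoprime_cfNum_cfDen f (n + 1))) hn⟩

lemma cfNum_period_le_of_pell (hns : ¬ IsSquare f) {p : ℕ} (hp : CFPeriod f p) {x y : ℤ}
    (hx : 0 < x) (hy : 0 < y) (h : x ^ 2 - f * y ^ 2 = 1) : cfNum f (p + 1) ≤ x := by
  obtain ⟨n, rfl, rfl⟩ := exists_eq_cfNum_cfDen_of_pell hns hx hy h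
  have hs : cfS f (n + 1) = 1 := by
    have hpell := cfNum_sq_sub hns (n + 1)
    have hpos := cfS_pos hns (n + 1)
    rcases neg_one_pow_eq_or ℤ (n + 1) with hsign | hsign <;> rw [hsign] at hpell <;> linarith
  exact monotone_cfNum_succ hns (hp.2 _ (isPeriod_of_cfS_eq_one (by omega) hs))

lemma cfEta_mem_Ioo (hns : ¬ IsSquare f) {i : ℕ} (hi : 1 ≤ i) : cfEta f i ∈ Set.Ioo (-1) 0 := by
  obtain ⟨k, rfl⟩ := Nat.exists_eq_add_of_le' hi
  exact cfEta_succ_mem_Ioo hns k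

/-- `-1/ηᵢ` runs the continued fraction algorithm backwards: its floor is `aᵢ₋₁`. -/
lemma cfA_eq_and_cfEta_mul_cfXi (hns : ¬ IsSquare f) {i j : ℕ} (hi : 1 ≤ i)
    (h : cfEta f (i + 1) * cfXi f j = -1) :
    cfA f i = cfA f j ∧ cfEta f i * cfXi f (j + 1) = -1 := by
  have hη : cfEta f i = cfA f i - cfXi f j := by
    linear_combination (cfEta f i - cfA f i) * h - cfXi f j * cfEta_sub_cfA_mul hns i
  have ha : cfA f i = cfA f j := by
    obtain ⟨h1, h2⟩ := cfEta_mem_Ioo hns hi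
    rw [cfA_eq_floor hns j, eq_comm, Int.floor_eq_iff]
    constructor <;> linarith
  refine ⟨ha, ?_⟩
  rw [hη, ha]
  linear_combination -cfXi_sub_cfA_mul hns j

lemma cfEta_period_mul_cfXi_one (hns : ¬ IsSquare f) {p : ℕ} (hp : CFIsPeriod f p) :
    cfEta f p * cfXi f 1 = -1 := by
  have hs := cfS_period hns hp
  have hη : cfEta f p = cfR f p - √f := by simp [cfEta, hs]; ring
  have hr : cfR f p = cfA f 0 := by
    obtain ⟨h1, h2⟩ := cfEta_mem_Ioo hns hp.1
    rw [cfA_eq_floor hns, cfXi_zero, eq_comm, Int.floor_eq_iff]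
    constructor <;> linarith
  rw [hη, hr, ← cfXi_zero]
  linear_combination -cfXi_sub_cfA_mul hns 0

lemma cfEta_mul_cfXi_of_period (hns : ¬ IsSquare f) {p : ℕ} (hp : CFIsPeriod f p) (j : ℕ) :
    ∀ i, 1 ≤ i → i + j = p → cfEta f i * cfXi f (j + 1) = -1 := by
  induction j with
  | zero => rintro i - rfl; exact cfEta_period_mul_cfXi_one hns hp
  | succ j ih =>
    intro i hi hij
    exact (cfA_eq_and_cfEta_mul_cfXi hns hi (ih (i + 1) (by omega) (by omega))).2

lemma cfA_palindrome (hns : ¬ IsSquare f) {p : ℕ} (hp : CFIsPeriod f p) {i j : ℕ} (hi : 1 ≤ i)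
    (hj : 1 ≤ j) (hij : i + j = p) : cfA f i = cfA f j := by
  obtain ⟨k, rfl⟩ := Nat.exists_eq_add_of_le' hj
  exact (cfA_eq_and_cfEta_mul_cfXi hns hi
    (cfEta_mul_cfXi_of_period hns hp k (i + 1) (by omega) (by omega))).1

lemma cfNum_cfDen_two_mul_add_one (hns : ¬ IsSquare f) {m : ℕ} (hm : 1 ≤ m)
    (hp : CFIsPeriod f (2 * m)) :
    cfNum f (2 * m + 1) = cfNum f (m + 2) * cfDen f (m + 1) + cfNum f (m + 1) * cfDen f m ∧
      cfDen f (2 * m + 1) = cfDen f (m + 2) * cfDen f (m + 1) + cfDen f (m + 1) * cfDen f m := by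
  obtain ⟨k, rfl⟩ := Nat.exists_eq_add_of_le' hm
  set X := contMatrix (fun i => cfA f (i + 1)) k
  have hsplit : contMatrix (cfA f) (2 * (k + 1)) = contMatrix (cfA f) (k + 2) * Xᵀ := by
    rw [show 2 * (k + 1) = k + 2 + k by ring, contMatrix_add,
      transpose_contMatrix (b := fun i => cfA f (k + 2 + i)) fun i j hij =>
        cfA_palindrome hns hp (by omega) (by omega) (by omega)]
  have hX : ∀ j, X 0 j = contMatrix (cfA f) (k + 1) 1 j := fun j => by
    rw [contMatrix_succ', stepMatrix_mul_apply_one]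
  have h00 := congrFun (congrFun hsplit 0) 0
  have h10 := congrFun (congrFun hsplit 1) 0
  simp only [mul_apply, Fin.sum_univ_two, transpose_apply, hX, contMatrix_cfA] at h00 h10
  exact ⟨h00, h10⟩

end SqrtContinuedFraction

theorem stmt_10_general (f m : ℕ) (hns : ¬ IsSquare f) (hm : 1 ≤ m)
    (hper : CFPeriod f (2 * m)) (c h : ℤ) (hfund : IsFundamentalPell f c h) :
    c = cfNum f (m + 2) * cfDen f (m + 1) + cfNum f (m + 1) * cfDen f m ∧
      h = cfDen f (m + 1) * (cfDen f (m + 2) + cfDen f m) := by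
  obtain ⟨hc, hh, hpell, hmin⟩ := hfund
  obtain ⟨hnum, hden⟩ := cfNum_cfDen_two_mul_add_one hns hm hper.1
  have hsol : cfNum f (2 * m + 1) ^ 2 - f * cfDen f (2 * m + 1) ^ 2 = 1 := by
    rw [cfNum_sq_sub hns, cfS_period hns hper.1, Even.neg_one_pow ⟨m, two_mul m⟩, one_mul]
  have hden_pos : 0 < cfDen f (2 * m + 1) := by
    have := one_le_cfDen hns (2 * m - 1)
    rwa [show 2 * m - 1 + 2 = 2 * m + 1 by omega] at this
  have hc_eq : c = cfNum f (2 * m + 1) :=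
    le_antisymm (hmin _ _ (one_le_cfNum hns _) hden_pos hsol)
      (cfNum_period_le_of_pell hns hper hc hh hpell)
  have hh_eq : h = cfDen f (2 * m + 1) := by
    have hf : (f : ℤ) ≠ 0 := by have := two_le_of_not_isSquare hns; positivity
    refine (pow_left_inj₀ hh.le hden_pos.le two_ne_zero).mp (mul_left_cancel₀ hf ?_)
    linear_combination hsol - hpell + (c + cfNum f (2 * m + 1)) * hc_eq
  exact ⟨hc_eq.trans hnum, hh_eq.trans (hden.trans (by ring))⟩

theorem stmt_10 (f m : ℕ) (hf : 0 < f) (hns : ¬ IsSquare f) (hm : 1 ≤ m)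
    (hper : CFPeriod f (2 * m)) (c h : ℤ) (hfund : IsFundamentalPell f c h) :
    c = cfNum f (m + 2) * cfDen f (m + 1) + cfNum f (m + 1) * cfDen f m ∧
      h = cfDen f (m + 1) * (cfDen f (m + 2) + cfDen f m) :=
  stmt_10_general f m hns hm hper c h hfund
end
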